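/- Let G = H *_A (A ⊕ ℤ) where A is a maximal abelian subgroup of a CSA group H, and let z generate the ℤ factor. Then A ⊕ ℤ is a maximal abelian subgroup of G, and any element of G commuting with a nontrivial element of A lies in A ⊕ ℤ. -/

import Mathlib

/-- A word alternating between `X \ C` and `Y \ C`. -/
def IsAlternatingWord {G : Type*} [Group G] (X Y C : Subgroup G)
    (m : ℕ) (g : ℕ → G) : Prop :=
  (∀ i < m, (g i ∈ X ∨ g i ∈ Y) ∧ g i ∉ C) ∧
  (∀ i, i + 1 < m → ¬ (g i ∈ X ∧ g (i + 1) ∈ X) ∧ ¬ (g i ∈ Y ∧ g (i + 1) ∈ Y))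

/-!
Write `K = A ⊔ ⟨z⟩`. Every element of `G` is `c * w` with `c ∈ A` and `w` a reduced word with
letters alternately in `H \ A` and `K \ A`. If `w` commutes with some `1 ≠ a ∈ A`, the trailing
letters of `w` from the abelian group `K` can be stripped. A remaining last letter `h ∈ H \ A`
is impossible: `h a h⁻¹ ∈ H \ A` by malnormality of `A`, so `w a w⁻¹` is the product of the
reduced palindrome `w' (h a h⁻¹) w'⁻¹`, which does not lie in `A`. Hence the centralizer of `a`
lies in `K`, and `K` is maximal abelian (if `A = 1` then `H = 1` and `K = G`).
-/

open Subgroup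

section ReducedWord

variable {G : Type*} [Group G] {X Y C : Subgroup G}

def Alternates (X Y : Subgroup G) (u v : G) : Prop :=
  ¬(u ∈ X ∧ v ∈ X) ∧ ¬(u ∈ Y ∧ v ∈ Y)

theorem Alternates.symm {u v : G} (h : Alternates X Y u v) : Alternates X Y v u :=
  ⟨fun h' => h.1 h'.symm, fun h' => h.2 h'.symm⟩

theorem alternates_inv_inv {u v : G} : Alternates X Y u⁻¹ v⁻¹ ↔ Alternates X Y u v := by
  simp only [Alternates, inv_mem_iff]

structure IsReducedWord (X Y C : Subgroup G) (l : List G) : Prop where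
  mem : ∀ u ∈ l, (u ∈ X ∨ u ∈ Y) ∧ u ∉ C
  isChain : l.IsChain (Alternates X Y)

theorem isReducedWord_cons {u : G} {l : List G} :
    IsReducedWord X Y C (u :: l) ↔ ((u ∈ X ∨ u ∈ Y) ∧ u ∉ C) ∧
      (∀ v ∈ l.head?, Alternates X Y u v) ∧ IsReducedWord X Y C l := by
  constructor
  · rintro ⟨hmem, hchain⟩
    exact ⟨hmem u List.mem_cons_self, (List.isChain_cons.1 hchain).1,
      fun v hv => hmem v (List.mem_cons_of_mem u hv), hchain.tail⟩
  · rintro ⟨hu, hj, hl⟩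
    exact ⟨List.forall_mem_cons.2 ⟨hu, hl.mem⟩, List.isChain_cons.2 ⟨hj, hl.isChain⟩⟩

theorem isReducedWord_append {l₁ l₂ : List G} :
    IsReducedWord X Y C (l₁ ++ l₂) ↔ IsReducedWord X Y C l₁ ∧ IsReducedWord X Y C l₂ ∧
      ∀ u ∈ l₁.getLast?, ∀ v ∈ l₂.head?, Alternates X Y u v := by
  constructor
  · rintro ⟨hmem, hchain⟩
    obtain ⟨h₁, h₂, hj⟩ := List.isChain_append.1 hchain
    exact ⟨⟨fun u hu => hmem u (List.mem_append_left _ hu), h₁⟩,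
      ⟨fun u hu => hmem u (List.mem_append_right _ hu), h₂⟩, hj⟩
  · rintro ⟨h₁, h₂, hj⟩
    exact ⟨fun u hu => (List.mem_append.1 hu).elim (h₁.mem u) (h₂.mem u),
      h₁.isChain.append h₂.isChain hj⟩

namespace IsReducedWord

theorem nil : IsReducedWord X Y C [] := ⟨by simp, .nil⟩

theorem swap {l : List G} (h : IsReducedWord X Y C l) : IsReducedWord Y X C l :=
  ⟨fun u hu => ⟨(h.mem u hu).1.symm, (h.mem u hu).2⟩, h.isChain.imp fun _ _ h' => ⟨h'.2, h'.1⟩⟩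

theorem map_inv_reverse {l : List G} (h : IsReducedWord X Y C l) :
    IsReducedWord X Y C (l.reverse.map (·⁻¹)) := by
  refine ⟨?_, ?_⟩
  · simp only [List.mem_map, List.mem_reverse]
    rintro _ ⟨u, hu, rfl⟩
    simpa only [inv_mem_iff] using h.mem u hu
  · rw [List.isChain_map, List.isChain_reverse]
    exact h.isChain.imp fun _ _ huv => alternates_inv_inv.2 huv.symm

theorem isAlternatingWord {l : List G} (h : IsReducedWord X Y C l) :
    IsAlternatingWord X Y C l.length (l.getD · 1) := by
  refine ⟨fun i hi => ?_, fun i hi => ?_⟩ <;> dsimp only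
  · rw [List.getD_eq_getElem l 1 hi]
    exact h.mem _ (l.getElem_mem hi)
  · rw [List.getD_eq_getElem l 1 (by omega), List.getD_eq_getElem l 1 hi]
    exact List.isChain_iff_getElem.1 h.isChain i hi

theorem prod_notMem
    (hfree : ∀ (m : ℕ) (g : ℕ → G), 1 ≤ m → IsAlternatingWord X Y C m g →
      (List.ofFn fun j : Fin m => g j).prod ∉ C)
    {l : List G} (h : IsReducedWord X Y C l) (hne : l ≠ []) : l.prod ∉ C := by
  simpa using hfree l.length _ (List.length_pos_iff.2 hne) h.isAlternatingWord

theorem exists_mul_prod_eq (hXY : X ⊓ Y ≤ C) {y : G} (hy : y ∈ X) {l : List G}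
    (hl : IsReducedWord X Y C l) :
    ∃ c ∈ C, ∃ l', IsReducedWord X Y C l' ∧ y * l.prod = c * l'.prod := by
  induction l generalizing y with
  | nil =>
    by_cases hyC : y ∈ C
    · exact ⟨y, hyC, [], nil, by simp⟩
    · exact ⟨1, C.one_mem, [y], isReducedWord_cons.2 ⟨⟨.inl hy, hyC⟩, by simp, nil⟩, by simp⟩
  | cons w t ih =>
    by_cases hwX : w ∈ X
    · obtain ⟨c, hc, l', hl', h⟩ := ih (X.mul_mem hy hwX) (isReducedWord_cons.1 hl).2.2
      exact ⟨c, hc, l', hl', by rw [List.prod_cons, ← mul_assoc, h]⟩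
    by_cases hyC : y ∈ C
    · exact ⟨y, hyC, w :: t, hl, rfl⟩
    have hyY : y ∉ Y := fun h => hyC (hXY ⟨hy, h⟩)
    refine ⟨1, C.one_mem, y :: w :: t, isReducedWord_cons.2 ⟨⟨.inl hy, hyC⟩, ?_, hl⟩, by simp⟩
    simp only [List.head?_cons, Option.mem_def, Option.some.injEq, forall_eq']
    exact ⟨fun h => hwX h.2, fun h => hyY h.1⟩

theorem append_conj (hXY : X ⊓ Y ≤ C) {l : List G} {x x' : G}
    (h : IsReducedWord X Y C (l ++ [x])) (hx : x ∈ X) (hx' : x' ∈ X) (hx'C : x' ∉ C) :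
    IsReducedWord X Y C (l ++ x' :: l.reverse.map (·⁻¹)) := by
  obtain ⟨hl, -, hj⟩ := isReducedWord_append.1 h
  have hlast : ∀ u ∈ l.getLast?, u ∉ X := fun u hu huX => (hj u hu x rfl).1 ⟨huX, hx⟩
  have hx'Y : x' ∉ Y := fun h => hx'C (hXY ⟨hx', h⟩)
  refine isReducedWord_append.2
    ⟨hl, isReducedWord_cons.2 ⟨⟨.inl hx', hx'C⟩, ?_, hl.map_inv_reverse⟩, ?_⟩
  · simp only [List.head?_map, List.head?_reverse, Option.mem_def, Option.map_eq_some_iff]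
    rintro _ ⟨u, hu, rfl⟩
    exact ⟨fun h => hlast u hu (inv_mem_iff.1 h.2), fun h => hx'Y h.1⟩
  · simp only [List.head?_cons, Option.mem_def, Option.some.injEq, forall_eq']
    exact fun u hu => ⟨fun h => hlast u hu h.1, fun h => hx'Y h.2⟩

theorem conj_prod_notMem
    (hfree : ∀ l, IsReducedWord X Y C l → l ≠ [] → l.prod ∉ C)
    (hCX : C ≤ X) (hXY : X ⊓ Y ≤ C)
    (hmal : ∀ x ∈ X, x ∉ C → ∀ a ∈ C, x * a * x⁻¹ ∈ C → a = 1)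
    {l : List G} {x : G} (h : IsReducedWord X Y C (l ++ [x])) (hx : x ∈ X)
    {a : G} (ha : a ∈ C) (ha1 : a ≠ 1) :
    (l ++ [x]).prod * a * (l ++ [x]).prod⁻¹ ∉ C := by
  have hxC : x ∉ C := (h.mem x (by simp)).2
  have hx' : x * a * x⁻¹ ∈ X := X.mul_mem (X.mul_mem hx (hCX ha)) (X.inv_mem hx)
  have hx'C : x * a * x⁻¹ ∉ C := fun hmem => ha1 (hmal x hx hxC a ha hmem)
  have := hfree _ (h.append_conj hXY hx hx' hx'C) (by simp)
  rw [List.prod_append, List.prod_cons, List.map_reverse, ← List.prod_inv_reverse] at this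
  convert this using 1
  simp only [List.prod_append, List.prod_singleton]
  group

theorem prod_mem_of_commute
    (hfree : ∀ l, IsReducedWord X Y C l → l ≠ [] → l.prod ∉ C)
    (hCX : C ≤ X) (hCY : C ≤ Y) (hXY : X ⊓ Y ≤ C)
    (hmal : ∀ x ∈ X, x ∉ C → ∀ a ∈ C, x * a * x⁻¹ ∈ C → a = 1)
    (hY : ∀ x ∈ Y, ∀ y ∈ Y, Commute x y) {a : G} (ha : a ∈ C) (ha1 : a ≠ 1)
    {l : List G} (hl : IsReducedWord X Y C l) (hcomm : Commute l.prod a) : l.prod ∈ Y := by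
  have not_commute : ∀ l x, IsReducedWord X Y C (l ++ [x]) → x ∈ X →
      ¬Commute (l ++ [x]).prod a := fun l x h hx hc =>
    h.conj_prod_notMem hfree hCX hXY hmal hx ha ha1 (by rwa [hc.eq, mul_inv_cancel_right])
  obtain rfl | ⟨l', x, rfl⟩ := l.eq_nil_or_concat'
  · exact List.prod_nil (α := G) ▸ Y.one_mem
  have hxY : x ∈ Y := (hl.mem x (by simp)).1.resolve_left fun hx => not_commute l' x hl hx hcomm
  rw [List.prod_append, List.prod_singleton] at hcomm ⊢
  have hcomm' : Commute l'.prod a := by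
    simpa using hcomm.mul_left (hY x hxY a (hCY ha)).inv_left
  obtain ⟨hl', -, hj⟩ := isReducedWord_append.1 hl
  obtain rfl | ⟨l'', w, rfl⟩ := l'.eq_nil_or_concat'
  · simpa using hxY
  have hwX : w ∈ X := (hl'.mem w (by simp)).1.resolve_right fun hwY =>
    (hj w (by simp) x rfl).2 ⟨hwY, hxY⟩
  exact absurd hcomm' (not_commute l'' w hl' hwX)

end IsReducedWord

theorem exists_eq_mul_prod_of_mem_closure (hCX : C ≤ X) (hCY : C ≤ Y) (hXY : X ⊓ Y ≤ C)
    {g : G} (hg : g ∈ closure ((X : Set G) ∪ Y)) :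
    ∃ c ∈ C, ∃ l, IsReducedWord X Y C l ∧ g = c * l.prod := by
  have step : ∀ x ∈ (X : Set G) ∪ Y, ∀ c ∈ C, ∀ l, IsReducedWord X Y C l →
      ∃ c' ∈ C, ∃ l', IsReducedWord X Y C l' ∧ x * (c * l.prod) = c' * l'.prod := by
    rintro x (hx | hx) c hc l hl <;> rw [← mul_assoc]
    · exact hl.exists_mul_prod_eq hXY (X.mul_mem hx (hCX hc))
    · obtain ⟨c', hc', l', hl', h⟩ :=
        hl.swap.exists_mul_prod_eq (inf_comm X Y ▸ hXY) (Y.mul_mem hx (hCY hc))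
      exact ⟨c', hc', l', hl'.swap, h⟩
  induction hg using closure_induction_left with
  | one => exact ⟨1, C.one_mem, [], .nil, by simp⟩
  | mul_left x hx _ _ ih =>
    obtain ⟨c, hc, l, hl, rfl⟩ := ih
    exact step x hx c hc l hl
  | inv_mul_cancel x hx _ _ ih =>
    obtain ⟨c, hc, l, hl, rfl⟩ := ih
    refine step x⁻¹ ?_ c hc l hl
    rcases hx with hx | hx
    exacts [.inl (X.inv_mem hx), .inr (Y.inv_mem hx)]

theorem mem_of_commute_of_mem_closure
    (hfree : ∀ l, IsReducedWord X Y C l → l ≠ [] → l.prod ∉ C)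
    (hCX : C ≤ X) (hCY : C ≤ Y) (hXY : X ⊓ Y ≤ C)
    (hmal : ∀ x ∈ X, x ∉ C → ∀ a ∈ C, x * a * x⁻¹ ∈ C → a = 1)
    (hY : ∀ x ∈ Y, ∀ y ∈ Y, Commute x y) {a : G} (ha : a ∈ C) (ha1 : a ≠ 1)
    {g : G} (hg : g ∈ closure ((X : Set G) ∪ Y)) (hcomm : Commute g a) : g ∈ Y := by
  obtain ⟨c, hc, l, hl, rfl⟩ := exists_eq_mul_prod_of_mem_closure hCX hCY hXY hg
  have hca : Commute c a := hY c (hCY hc) a (hCY ha)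
  have hl_comm : Commute l.prod a := by simpa using hca.inv_left.mul_left hcomm
  exact Y.mul_mem (hCY hc) (hl.prod_mem_of_commute hfree hCX hCY hXY hmal hY ha ha1 hl_comm)

end ReducedWord

section MaximalAbelian

variable {G : Type*} [Group G] {H A : Subgroup G}

theorem commute_of_mem_sup_zpowers (hA : ∀ x ∈ A, ∀ y ∈ A, Commute x y) {z : G}
    (hz : ∀ a ∈ A, Commute z a) {x y : G} (hx : x ∈ A ⊔ zpowers z) (hy : y ∈ A ⊔ zpowers z) :
    Commute x y := by
  have hgen : ∀ x ∈ (A : Set G) ∪ zpowers z, ∀ y ∈ (A : Set G) ∪ zpowers z, x * y = y * x := by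
    rintro x (hx | ⟨m, rfl⟩) y (hy | ⟨n, rfl⟩)
    · exact hA x hx y hy
    · exact ((hz x hx).zpow_left n).symm
    · exact (hz y hy).zpow_left m
    · exact Commute.zpow_zpow_self z m n
  have := isMulCommutative_closure hgen
  rw [sup_eq_closure] at hx hy
  exact setLike_mul_comm hx hy

theorem mem_of_forall_commute (hAH : A ≤ H) (hA : ∀ x ∈ A, ∀ y ∈ A, Commute x y)
    (hAmax : ∀ B : Subgroup G, B ≤ H → (∀ x ∈ B, ∀ y ∈ B, Commute x y) → A ≤ B → B = A)
    {u : G} (huH : u ∈ H) (hu : ∀ a ∈ A, Commute u a) : u ∈ A := by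
  have hB : A ⊔ zpowers u = A := hAmax _ (sup_le hAH (zpowers_le.2 huH))
    (fun _ hx _ hy => commute_of_mem_sup_zpowers hA hu hx hy) le_sup_left
  exact hB ▸ mem_sup_right (mem_zpowers u)

end MaximalAbelian

theorem abelian_flat_maximal_abelian_general {G : Type*} [Group G]
    (H A : Subgroup G) (z : G) (hAH : A ≤ H)
    (hAcomm : ∀ x ∈ A, ∀ y ∈ A, Commute x y)
    (hAmax : ∀ B : Subgroup G, B ≤ H → (∀ x ∈ B, ∀ y ∈ B, Commute x y) →
      A ≤ B → B = A)
    (hCSA : ∀ B : Subgroup G, B ≤ H → (∀ x ∈ B, ∀ y ∈ B, Commute x y) →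
      (∀ B' : Subgroup G, B' ≤ H → (∀ x ∈ B', ∀ y ∈ B', Commute x y) →
        B ≤ B' → B' = B) →
      ∀ g ∈ H, g ∉ B → ∀ x ∈ B, g * x * g⁻¹ ∈ B → x = 1)
    (hz : ∀ a ∈ A, Commute z a)
    (hgen : Subgroup.closure ((H : Set G) ∪ {z}) = ⊤)
    (hamalg : ∀ (m : ℕ) (g : ℕ → G), 1 ≤ m →
      IsAlternatingWord H (A ⊔ Subgroup.zpowers z) A m g →
      (List.ofFn fun j : Fin m => g j).prod ∉ A) :
    ((∀ x ∈ A ⊔ Subgroup.zpowers z, ∀ y ∈ A ⊔ Subgroup.zpowers z, Commute x y) ∧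
      ∀ B : Subgroup G, (∀ x ∈ B, ∀ y ∈ B, Commute x y) →
        A ⊔ Subgroup.zpowers z ≤ B → B = A ⊔ Subgroup.zpowers z) ∧
    (∀ g a : G, a ∈ A → a ≠ 1 → Commute g a → g ∈ A ⊔ Subgroup.zpowers z) := by
  set K := A ⊔ zpowers z
  have hAK : A ≤ K := le_sup_left
  have hK : ∀ x ∈ K, ∀ y ∈ K, Commute x y := fun _ hx _ hy =>
    commute_of_mem_sup_zpowers hAcomm hz hx hy
  have hHK : H ⊓ K ≤ A := fun u hu =>
    mem_of_forall_commute hAH hAcomm hAmax hu.1 fun a ha => hK u hu.2 a (hAK ha)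
  have hHK_top : closure ((H : Set G) ∪ K) = ⊤ := top_unique <| hgen ▸ closure_mono
    (Set.union_subset_union_right _ (Set.singleton_subset_iff.2 (mem_sup_right (mem_zpowers z))))
  have hcent : ∀ g a : G, a ∈ A → a ≠ 1 → Commute g a → g ∈ K := fun g _ ha ha1 hga =>
    mem_of_commute_of_mem_closure (fun _ hl hne => hl.prod_notMem hamalg hne) hAH hAK hHK
      (hCSA A hAH hAcomm hAmax) hK ha ha1 (hHK_top ▸ mem_top g) hga
  refine ⟨⟨hK, fun B hB hKB => le_antisymm (fun b hb => ?_) hKB⟩, hcent⟩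
  by_cases hA : ∃ a ∈ A, a ≠ 1
  · obtain ⟨a, ha, ha1⟩ := hA
    exact hcent b a ha ha1 (hB b hb a (hKB (hAK ha)))
  push Not at hA
  have hHA : H ≤ A := fun h hh =>
    mem_of_forall_commute hAH hAcomm hAmax hh fun a ha => hA a ha ▸ Commute.one_right h
  have hK_top : K = ⊤ :=
    top_unique <| hHK_top ▸ (closure_le K).2 (Set.union_subset (hHA.trans hAK) le_rfl)
  exact hK_top ▸ mem_top b

/-- Let `G = H *_A (A ⊕ ⟨z⟩)` be a free abelian flat over a CSA group `H`,
where `A` is maximal abelian in `H` and `z` generates the `ℤ` factor. Then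
`A ⊔ ⟨z⟩` (the flat `A ⊕ ℤ`) is a maximal abelian subgroup of `G`, and any
element of `G` commuting with a nontrivial element of `A` lies in `A ⊔ ⟨z⟩`. -/
theorem abelian_flat_maximal_abelian {G : Type*} [Group G]
    (H A : Subgroup G) (z : G) (hAH : A ≤ H)
    (hAcomm : ∀ x ∈ A, ∀ y ∈ A, Commute x y)
    (hAmax : ∀ B : Subgroup G, B ≤ H → (∀ x ∈ B, ∀ y ∈ B, Commute x y) →
      A ≤ B → B = A)
    (hCSA : ∀ B : Subgroup G, B ≤ H → (∀ x ∈ B, ∀ y ∈ B, Commute x y) →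
      (∀ B' : Subgroup G, B' ≤ H → (∀ x ∈ B', ∀ y ∈ B', Commute x y) →
        B ≤ B' → B' = B) →
      ∀ g ∈ H, g ∉ B → ∀ x ∈ B, g * x * g⁻¹ ∈ B → x = 1)
    (hz : ∀ a ∈ A, Commute z a) (hzH : z ∉ H) (hzinf : ¬ IsOfFinOrder z)
    (hgen : Subgroup.closure ((H : Set G) ∪ {z}) = ⊤)
    (hamalg : ∀ (m : ℕ) (g : ℕ → G), 1 ≤ m →
      IsAlternatingWord H (A ⊔ Subgroup.zpowers z) A m g →
      (List.ofFn fun j : Fin m => g j).prod ∉ A) :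
    ((∀ x ∈ A ⊔ Subgroup.zpowers z, ∀ y ∈ A ⊔ Subgroup.zpowers z, Commute x y) ∧
      ∀ B : Subgroup G, (∀ x ∈ B, ∀ y ∈ B, Commute x y) →
        A ⊔ Subgroup.zpowers z ≤ B → B = A ⊔ Subgroup.zpowers z) ∧
    (∀ g a : G, a ∈ A → a ≠ 1 → Commute g a → g ∈ A ⊔ Subgroup.zpowers z) :=
  abelian_flat_maximal_abelian_general H A z hAH hAcomm hAmax hCSA hz hgen hamalg
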